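/- Let u be a concave, law-determined monetary utility function on L^∞ of an atomless probability space, with the Fatou property and the CxLS property. Then the acceptance set at the level of distributions 𝒩 := {Law(ξ) : ξ ∈ L^∞, u(ξ) ≥ 0} and its complement (within laws of bounded random variables) are convex with respect to mixtures: if ξ, η ∈ L^∞ with u(ξ) ≥ 0 and u(η) ≥ 0, and ζ ∈ L^∞ has law α·Law(ξ) + (1−α)·Law(η) for some α ∈ (0,1), then u(ζ) ≥ 0; and if instead u(ξ) < 0 and u(η) < 0, then u(ζ) < 0. -/

import Mathlib

open MeasureTheory Filter Set

/-- A (representative of an) element of `L^∞`: a measurable, essentially bounded function. -/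
def BddMeas {Ω : Type} [MeasurableSpace Ω] (P : Measure Ω) (ξ : Ω → ℝ) : Prop :=
  Measurable ξ ∧ ∃ C : ℝ, ∀ᵐ ω ∂P, |ξ ω| ≤ C

/-- `ξ` has the two-point law `l·δ_x + (1-l)·δ_y`. -/
def HasDyadicLaw {Ω : Type} [MeasurableSpace Ω] (P : Measure Ω) (ξ : Ω → ℝ)
    (x y l : ℝ) : Prop :=
  P.map ξ = ENNReal.ofReal l • Measure.dirac x + ENNReal.ofReal (1 - l) • Measure.dirac y

/-- Convex level sets at the level of distributions: if `u ξ = u η`, `l ∈ (0,1)` and `ζ` has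
law `l·Law(ξ) + (1-l)·Law(η)`, then `u ζ = u ξ`. -/
def CxLS {Ω : Type} [MeasurableSpace Ω] (P : Measure Ω) (u : (Ω → ℝ) → ℝ) : Prop :=
  ∀ ξ η ζ : Ω → ℝ, BddMeas P ξ → BddMeas P η → BddMeas P ζ → u ξ = u η →
    ∀ l : ℝ, 0 < l → l < 1 →
      P.map ζ = ENNReal.ofReal l • P.map ξ + ENNReal.ofReal (1 - l) • P.map η →
      u ζ = u ξ


/-
On an atomless space there is a uniform random variable `U`, built from a nested dyadic family of
events whose measures are fixed by Sierpiński's intermediate value theorem. Quantile transforms of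
`U` realise every law with bounded support, and realise two laws with ordered distribution
functions as pointwise ordered random variables; so a monotone law-invariant `u` is monotone for
first-order stochastic dominance.

Suppose `u ξ ≤ u η`. Shifting `η` by the constant `u ξ - u η ≤ 0` gives `η'` with `u η' = u ξ`,
so by CxLS every variable whose law is the `α`-mixture of the laws of `ξ` and `η'` has utility
`u ξ`. That mixture is dominated by the law of `ζ`, hence `u ξ ≤ u ζ`. Symmetrically
`u ζ ≤ max (u ξ) (u η)`, and `min (u ξ) (u η) ≤ u ζ ≤ max (u ξ) (u η)` gives both claims.
-/

open ProbabilityTheory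
open scoped ENNReal

theorem exists_superset_nearly_maximal {Ω : Type*} [MeasurableSpace Ω] (P : Measure Ω)
    [IsFiniteMeasure P] {T : Set (Set Ω)} {B : Set Ω} (hB : B ∈ T) {ε : ℝ≥0∞} (hε : ε ≠ 0) :
    ∃ B' ∈ T, B ⊆ B' ∧ ∀ B'' ∈ T, B ⊆ B'' → P B'' ≤ P B' + ε := by
  set s := ⨆ B'' ∈ {B'' | B'' ∈ T ∧ B ⊆ B''}, P B''
  have hs : ∀ B'' ∈ T, B ⊆ B'' → P B'' ≤ s := fun B'' h1 h2 =>
    le_iSup₂ (f := fun B'' (_ : B'' ∈ {B'' | B'' ∈ T ∧ B ⊆ B''}) => P B'') B'' ⟨h1, h2⟩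
  by_cases hsε : s ≤ ε
  · exact ⟨B, hB, subset_rfl, fun B'' h1 h2 => (hs B'' h1 h2).trans (hsε.trans le_add_self)⟩
  have hstop : s ≠ ⊤ := ne_top_of_le_ne_top (measure_ne_top P univ)
    (iSup₂_le fun B'' _ => measure_mono (subset_univ B''))
  obtain ⟨B', ⟨hB'T, hBB'⟩, hlt⟩ :=
    lt_biSup_iff.1 (ENNReal.sub_lt_self hstop (pos_of_gt (not_le.1 hsε)).ne' hε)
  exact ⟨B', hB'T, hBB', fun B'' h1 h2 => (hs B'' h1 h2).trans (tsub_le_iff_right.1 hlt.le)⟩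

theorem exists_monotone_nearly_maximal {Ω : Type*} [MeasurableSpace Ω] (P : Measure Ω)
    [IsFiniteMeasure P] {T : Set (Set Ω)} {B₀ : Set Ω} (hB₀ : B₀ ∈ T) :
    ∃ B : ℕ → Set Ω, Monotone B ∧ (∀ n, B n ∈ T) ∧
      ∀ n, ∀ B' ∈ T, B n ⊆ B' → P B' ≤ P (B (n + 1)) + (n : ℝ≥0∞)⁻¹ := by
  choose! g hgT hgsub hgmax using fun B (hB : B ∈ T) ε (hε : ε ≠ 0) =>
    exists_superset_nearly_maximal P hB hε
  have hε : ∀ n : ℕ, (n : ℝ≥0∞)⁻¹ ≠ 0 := fun n => ENNReal.inv_ne_zero.2 (ENNReal.natCast_ne_top n)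
  let B : ℕ → Set Ω := fun n => Nat.rec B₀ (fun n Bn => g Bn (n : ℝ≥0∞)⁻¹) n
  have hBT : ∀ n, B n ∈ T := by
    intro n
    induction n with
    | zero => exact hB₀
    | succ n ih => exact hgT _ ih _ (hε n)
  exact ⟨B, monotone_nat_of_le_succ fun n => hgsub _ (hBT n) _ (hε n), hBT,
    fun n => hgmax _ (hBT n) _ (hε n)⟩

def IsAtomless {Ω : Type*} [MeasurableSpace Ω] (P : Measure Ω) : Prop :=
  ∀ A : Set Ω, MeasurableSet A → 0 < P A →
    ∃ B : Set Ω, B ⊆ A ∧ MeasurableSet B ∧ 0 < P B ∧ P B < P A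

namespace IsAtomless

variable {Ω : Type*} [MeasurableSpace Ω] {P : Measure Ω} [IsFiniteMeasure P] {A : Set Ω}

theorem exists_subset_pos_le_half (hP : IsAtomless P) (hA : MeasurableSet A) (h0 : 0 < P A) :
    ∃ B ⊆ A, MeasurableSet B ∧ 0 < P B ∧ P B ≤ P A / 2 := by
  obtain ⟨B, hBA, hB, hB0, hBA'⟩ := hP A hA h0
  have hdiff : P (A \ B) = P A - P B := measure_sdiff hBA hB.nullMeasurableSet (measure_ne_top P B)
  by_cases hhalf : P B ≤ P A / 2
  · exact ⟨B, hBA, hB, hB0, hhalf⟩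
  refine ⟨A \ B, sdiff_subset, hA.diff hB, by rwa [hdiff, tsub_pos_iff_lt], ?_⟩
  rw [hdiff, tsub_le_iff_right]
  calc P A = P A / 2 + P A / 2 := (ENNReal.add_halves _).symm
    _ ≤ P A / 2 + P B := by gcongr; exact (not_le.1 hhalf).le

theorem exists_subset_pos_le (hP : IsAtomless P) (hA : MeasurableSet A) (h0 : 0 < P A)
    {ε : ℝ≥0∞} (hε : 0 < ε) : ∃ B ⊆ A, MeasurableSet B ∧ 0 < P B ∧ P B ≤ ε := by
  have key : ∀ n : ℕ, ∃ B ⊆ A, MeasurableSet B ∧ 0 < P B ∧ P B ≤ P A * 2⁻¹ ^ n := by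
    intro n
    induction n with
    | zero => exact ⟨A, subset_rfl, hA, h0, by simp⟩
    | succ n ih =>
      obtain ⟨B, hBA, hB, hB0, hBle⟩ := ih
      obtain ⟨C, hCB, hC, hC0, hCle⟩ := hP.exists_subset_pos_le_half hB hB0
      refine ⟨C, hCB.trans hBA, hC, hC0, hCle.trans ?_⟩
      rw [pow_succ, ← mul_assoc, ← div_eq_mul_inv]
      gcongr
  obtain ⟨n, hn⟩ := ENNReal.exists_inv_two_pow_lt
    (ENNReal.div_pos_iff.2 ⟨hε.ne', measure_ne_top P A⟩).ne'
  obtain ⟨B, hBA, hB, hB0, hBle⟩ := key n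
  refine ⟨B, hBA, hB, hB0, hBle.trans ?_⟩
  rw [mul_comm]
  exact (ENNReal.mul_lt_of_lt_div hn).le

/-- Sierpiński: greedily enlarge nearly maximally; if the limit had measure `< r`, a small set
disjoint from it could have been added at every stage. -/
theorem exists_subset_measure_eq (hP : IsAtomless P) (hA : MeasurableSet A) {r : ℝ≥0∞}
    (hr : r ≤ P A) : ∃ B ⊆ A, MeasurableSet B ∧ P B = r := by
  set T : Set (Set Ω) := {B | MeasurableSet B ∧ B ⊆ A ∧ P B ≤ r}
  have hempty : ∅ ∈ T := ⟨MeasurableSet.empty, empty_subset A, by simp⟩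
  obtain ⟨B, hmono, hBT, hmax⟩ := exists_monotone_nearly_maximal P hempty
  set Binf := ⋃ n, B n
  have hBinf : MeasurableSet Binf := MeasurableSet.iUnion fun n => (hBT n).1
  have hPBinf : P Binf ≤ r := by
    rw [hmono.measure_iUnion]
    exact iSup_le fun n => (hBT n).2.2
  rcases hPBinf.eq_or_lt with heq | hlt
  · exact ⟨Binf, iUnion_subset fun n => (hBT n).2.1, hBinf, heq⟩
  exfalso
  obtain ⟨C, hCA, hC, hC0, hCle⟩ := hP.exists_subset_pos_le (hA.diff hBinf)
    (by rw [measure_sdiff (iUnion_subset fun n => (hBT n).2.1) hBinf.nullMeasurableSet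
      (measure_ne_top P _)]; exact tsub_pos_of_lt (hlt.trans_le hr)) (tsub_pos_of_lt hlt)
  have hle : ∀ n : ℕ, P (B n) + P C ≤ P Binf + (n : ℝ≥0∞)⁻¹ := by
    intro n
    have hdisj : Disjoint (B n) C :=
      (disjoint_sdiff_right.mono_left (subset_iUnion B n)).mono_right hCA
    have hunion : B n ∪ C ∈ T := by
      refine ⟨(hBT n).1.union hC, union_subset (hBT n).2.1 (hCA.trans sdiff_subset), ?_⟩
      calc P (B n ∪ C) ≤ P (B n) + P C := measure_union_le _ _
        _ ≤ P Binf + (r - P Binf) := add_le_add (measure_mono (subset_iUnion B n)) hCle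
        _ = r := add_tsub_cancel_of_le hPBinf
    calc P (B n) + P C = P (B n ∪ C) := (measure_union hdisj hC).symm
      _ ≤ P (B (n + 1)) + (n : ℝ≥0∞)⁻¹ := hmax n _ hunion subset_union_left
      _ ≤ P Binf + (n : ℝ≥0∞)⁻¹ := by gcongr; exact subset_iUnion B (n + 1)
  have hlim : P Binf + P C ≤ P Binf + 0 :=
    le_of_tendsto_of_tendsto' ((tendsto_measure_iUnion_atTop hmono).add tendsto_const_nhds)
      (tendsto_const_nhds.add ENNReal.tendsto_inv_nat_nhds_zero) hle
  exact hC0.ne' (nonpos_iff_eq_zero.1 ((ENNReal.add_le_add_iff_left (measure_ne_top P _)).1 hlim))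

theorem exists_between_measure_eq (hP : IsAtomless P) {A' : Set Ω} (hA : MeasurableSet A)
    (hA' : MeasurableSet A') (hAA' : A ⊆ A') {r : ℝ≥0∞} (hAr : P A ≤ r) (hrA' : r ≤ P A') :
    ∃ B, A ⊆ B ∧ B ⊆ A' ∧ MeasurableSet B ∧ P B = r := by
  obtain ⟨C, hCA, hC, hPC⟩ := hP.exists_subset_measure_eq (hA'.diff hA) (r := r - P A) (by
    rw [measure_sdiff hAA' hA.nullMeasurableSet (measure_ne_top P A)]
    exact tsub_le_tsub_right hrA' _)
  refine ⟨A ∪ C, subset_union_left, union_subset hAA' (hCA.trans sdiff_subset), hA.union hC, ?_⟩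
  rw [measure_union (disjoint_sdiff_right.mono_right hCA) hC, hPC, add_tsub_cancel_of_le hAr]

end IsAtomless

section Dyadic

variable {Ω : Type*} [MeasurableSpace Ω] {P : Measure Ω}

/-- Level `n` of a dyadic filtration: `E k` plays the role of `{U ≤ k / 2 ^ n}` for the uniform
variable `U` to be built. -/
structure IsDyadicLevel (P : Measure Ω) (n : ℕ) (E : ℕ → Set Ω) : Prop where
  measurableSet : ∀ k, MeasurableSet (E k)
  mono : Monotone E
  measure_eq : ∀ k, P (E k) = ENNReal.ofReal (min ((k : ℝ) / 2 ^ n) 1)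

theorem isDyadicLevel_zero [IsProbabilityMeasure P] :
    IsDyadicLevel P 0 (fun k => if k = 0 then ∅ else univ) := by
  refine ⟨fun k => ?_, monotone_nat_of_le_succ fun k => ?_, fun k => ?_⟩
  · split_ifs <;> simp
  · split_ifs <;> simp_all
  · rcases Nat.eq_zero_or_pos k with rfl | hk
    · simp
    · simp [hk.ne', Nat.one_le_cast.2 hk]

theorem IsAtomless.exists_isDyadicLevel_succ [IsFiniteMeasure P] (hP : IsAtomless P) {n : ℕ}
    {E : ℕ → Set Ω} (hE : IsDyadicLevel P n E) :
    ∃ E', IsDyadicLevel P (n + 1) E' ∧ ∀ k, E' (2 * k) = E k := by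
  have h2n : (0 : ℝ) < 2 ^ n := by positivity
  have hpow : (2 : ℝ) ^ (n + 1) = 2 * 2 ^ n := pow_succ' 2 n
  have hB : ∀ j : ℕ, ∃ B, E j ⊆ B ∧ B ⊆ E (j + 1) ∧ MeasurableSet B ∧
      P B = ENNReal.ofReal (min (((2 * j + 1 : ℕ) : ℝ) / 2 ^ (n + 1)) 1) := by
    intro j
    refine hP.exists_between_measure_eq (hE.measurableSet j) (hE.measurableSet (j + 1))
      (hE.mono j.le_succ) ?_ ?_ <;> rw [hE.measure_eq] <;>
      refine ENNReal.ofReal_le_ofReal (min_le_min_right 1 ?_) <;>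
      rw [hpow, div_le_div_iff₀ (by positivity) (by positivity)] <;> push_cast <;> nlinarith
  choose B hEB hBE hBm hBP using hB
  let E' : ℕ → Set Ω := fun k => if Even k then E (k / 2) else B (k / 2)
  have heven : ∀ j, E' (2 * j) = E j := fun j => by simp [E']
  have hodd : ∀ j, E' (2 * j + 1) = B j := fun j => by
    simp [E', Nat.not_even_bit1, show (2 * j + 1) / 2 = j by omega]
  refine ⟨E', ⟨fun k => ?_, monotone_nat_of_le_succ fun k => ?_, fun k => ?_⟩, heven⟩ <;>
    obtain ⟨j, rfl | rfl⟩ := Nat.even_or_odd' k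
  · rw [heven]; exact hE.measurableSet j
  · rw [hodd]; exact hBm j
  · rw [heven, hodd]; exact hEB j
  · rw [hodd, show 2 * j + 1 + 1 = 2 * (j + 1) by ring, heven]; exact hBE j
  · rw [heven, hE.measure_eq, hpow]
    push_cast
    rw [mul_div_mul_left _ _ two_ne_zero]
  · rw [hodd, hBP]

theorem IsAtomless.exists_dyadic_family [IsProbabilityMeasure P] (hP : IsAtomless P) :
    ∃ E : ℕ → ℕ → Set Ω, (∀ n, IsDyadicLevel P n (E n)) ∧
      ∀ n m k l : ℕ, (k : ℝ) / 2 ^ n ≤ l / 2 ^ m → E n k ⊆ E m l := by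
  have step : ∀ n (E : {E // IsDyadicLevel P n E}),
      ∃ E' : {E' // IsDyadicLevel P (n + 1) E'}, ∀ k, E'.1 (2 * k) = E.1 k := fun n E =>
    let ⟨E', hE', hcons⟩ := hP.exists_isDyadicLevel_succ E.2
    ⟨⟨E', hE'⟩, hcons⟩
  choose f hf using step
  let F : (n : ℕ) → {E // IsDyadicLevel P n E} := fun n => Nat.rec ⟨_, isDyadicLevel_zero⟩ f n
  have hcons : ∀ n d k, (F (n + d)).1 (2 ^ d * k) = (F n).1 k := by
    intro n d
    induction d with
    | zero => simp
    | succ d ih =>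
      intro k
      rw [← add_assoc, pow_succ', mul_assoc]
      exact (hf _ _ _).trans (ih _)
  refine ⟨fun n => (F n).1, fun n => (F n).2, fun n m k l h => ?_⟩
  have h' : 2 ^ m * k ≤ 2 ^ n * l := by
    rw [div_le_div_iff₀ (by positivity) (by positivity)] at h
    exact_mod_cast (by linarith : (2 : ℝ) ^ m * k ≤ 2 ^ n * l)
  show (F n).1 k ⊆ (F m).1 l
  rw [← hcons n m k, ← hcons m n l, add_comm m n]
  exact (F (n + m)).2.mono h'

end Dyadic

theorem exists_dyadic_btwn {t s : ℝ} (ht : 0 ≤ t) (hts : t < s) :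
    ∃ n k : ℕ, t < k / 2 ^ n ∧ (k : ℝ) / 2 ^ n < s := by
  obtain ⟨n, hn⟩ := exists_pow_lt_of_lt_one (sub_pos.2 hts) (by norm_num : (2 : ℝ)⁻¹ < 1)
  have h2n : (0 : ℝ) < 2 ^ n := by positivity
  refine ⟨n, ⌊t * 2 ^ n⌋₊ + 1, ?_, ?_⟩
  · rw [lt_div_iff₀ h2n]
    exact_mod_cast Nat.lt_floor_add_one (t * 2 ^ n)
  · calc ((⌊t * 2 ^ n⌋₊ + 1 : ℕ) : ℝ) / 2 ^ n ≤ (t * 2 ^ n + 1) / 2 ^ n := by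
          gcongr
          push_cast
          exact add_le_add_left (Nat.floor_le (by positivity)) 1
      _ = t + 2⁻¹ ^ n := by rw [add_div, mul_div_cancel_right₀ _ h2n.ne', one_div, inv_pow]
      _ < s := by linarith

theorem cond_volume_Icc_zero_one_Iic (t : ℝ) :
    cond volume (Icc 0 1) (Iic t) = ENNReal.ofReal (min 1 t) := by
  rw [cond_apply measurableSet_Icc, Real.volume_Icc, ← Ici_inter_Iic, inter_assoc, Iic_inter_Iic,
    Ici_inter_Iic, Real.volume_Icc]
  simp

theorem measure_preimage_Iic_of_isUniform {Ω : Type*} [MeasurableSpace Ω] {P : Measure Ω}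
    {U : Ω → ℝ} (hUm : Measurable U) (hU : pdf.IsUniform U (Icc 0 1) P) (t : ℝ) :
    P (U ⁻¹' Iic t) = ENNReal.ofReal (min 1 t) := by
  rw [← Measure.map_apply hUm measurableSet_Iic, hU, cond_volume_Icc_zero_one_Iic]

section DyadicUniform

variable {Ω : Type*} {E : ℕ → ℕ → Set Ω}

noncomputable def dyadicUniform (E : ℕ → ℕ → Set Ω) (ω : Ω) : ℝ :=
  ⨆ p : ℕ × ℕ, (E p.1 p.2)ᶜ.indicator (fun _ => min ((p.2 : ℝ) / 2 ^ p.1) 1) ω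

theorem dyadicUniform_bddAbove (E : ℕ → ℕ → Set Ω) (ω : Ω) :
    BddAbove (range fun p : ℕ × ℕ => (E p.1 p.2)ᶜ.indicator
      (fun _ => min ((p.2 : ℝ) / 2 ^ p.1) 1) ω) :=
  ⟨1, forall_mem_range.2 fun _ => indicator_apply_le' (fun _ => min_le_right _ _)
    (fun _ => zero_le_one)⟩

theorem dyadicUniform_mem_Icc (E : ℕ → ℕ → Set Ω) (ω : Ω) : dyadicUniform E ω ∈ Icc 0 1 :=
  ⟨(indicator_nonneg (fun _ _ => by positivity) ω).trans
      (le_ciSup (dyadicUniform_bddAbove E ω) (0, 0)),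
    ciSup_le fun _ => indicator_apply_le' (fun _ => min_le_right _ _) (fun _ => zero_le_one)⟩

theorem dyadicUniform_preimage_Iic {t : ℝ} (ht : t ∈ Ico 0 1) :
    dyadicUniform E ⁻¹' Iic t = ⋂ p : {p : ℕ × ℕ // t < p.2 / 2 ^ p.1}, E p.1.1 p.1.2 := by
  ext ω
  simp only [mem_preimage, mem_Iic, mem_iInter, dyadicUniform,
    ciSup_le_iff (dyadicUniform_bddAbove E ω)]
  constructor
  · rintro h ⟨p, hp⟩
    by_contra hω
    have := h p
    simp only [indicator_of_mem (mem_compl hω), min_le_iff] at this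
    rcases this with h' | h' <;> linarith [ht.2]
  · intro h p
    by_cases hω : ω ∈ E p.1 p.2
    · simpa [hω] using ht.1
    · simp only [indicator_of_mem (mem_compl hω)]
      exact (min_le_left _ _).trans (not_lt.1 fun hp => hω (h ⟨p, hp⟩))

variable [MeasurableSpace Ω] {P : Measure Ω}

theorem measurable_dyadicUniform (hE : ∀ n k, MeasurableSet (E n k)) :
    Measurable (dyadicUniform E) :=
  Measurable.iSup fun p => measurable_const.indicator (hE p.1 p.2).compl

theorem measure_dyadicUniform_preimage_Iic (hE : ∀ n, IsDyadicLevel P n (E n))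
    (hEmono : ∀ n m k l : ℕ, (k : ℝ) / 2 ^ n ≤ l / 2 ^ m → E n k ⊆ E m l) {t : ℝ}
    (ht : t ∈ Ico 0 1) : P (dyadicUniform E ⁻¹' Iic t) = ENNReal.ofReal t := by
  rw [dyadicUniform_preimage_Iic ht, Directed.measure_iInter]
  · simp only [(hE _).measure_eq]
    refine le_antisymm (ENNReal.le_of_forall_pos_le_add fun ε hε _ => ?_)
      (le_iInf fun p => ENNReal.ofReal_le_ofReal (le_min p.2.le ht.2.le))
    obtain ⟨n, k, htk, hkε⟩ := exists_dyadic_btwn ht.1 (lt_add_of_pos_right t hε)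
    calc _ ≤ ENNReal.ofReal (min ((k : ℝ) / 2 ^ n) 1) := iInf_le_of_le ⟨(n, k), htk⟩ le_rfl
      _ ≤ ENNReal.ofReal (t + ε) := ENNReal.ofReal_le_ofReal ((min_le_left _ _).trans hkε.le)
      _ = ENNReal.ofReal t + ε := by
        rw [ENNReal.ofReal_add ht.1 ε.coe_nonneg, ENNReal.ofReal_coe_nnreal]
  · exact fun p => ((hE _).measurableSet _).nullMeasurableSet
  · intro p q
    rcases le_total ((p.1.2 : ℝ) / 2 ^ p.1.1) (q.1.2 / 2 ^ q.1.1) with hpq | hqp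
    · exact ⟨p, subset_rfl, hEmono _ _ _ _ hpq⟩
    · exact ⟨q, hEmono _ _ _ _ hqp, subset_rfl⟩
  · exact ⟨⟨(0, 1), by simpa using ht.2⟩, by simp [(hE _).measure_eq]⟩

end DyadicUniform

theorem IsAtomless.exists_isUniform {Ω : Type*} [MeasurableSpace Ω] {P : Measure Ω}
    [IsProbabilityMeasure P] (hP : IsAtomless P) :
    ∃ U : Ω → ℝ, Measurable U ∧ pdf.IsUniform U (Icc 0 1) P := by
  obtain ⟨E, hE, hEmono⟩ := hP.exists_dyadic_family
  have hU := measurable_dyadicUniform fun n => (hE n).measurableSet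
  have := Measure.isProbabilityMeasure_map (μ := P) hU.aemeasurable
  refine ⟨dyadicUniform E, hU, Measure.ext_of_Iic _ _ fun t => ?_⟩
  rw [Measure.map_apply hU measurableSet_Iic, cond_volume_Icc_zero_one_Iic]
  rcases lt_or_ge t 0 with ht0 | ht0
  · rw [ENNReal.ofReal_of_nonpos ((min_le_right _ _).trans ht0.le)]
    exact measure_mono_null (fun ω hω => ht0.not_ge ((dyadicUniform_mem_Icc E ω).1.trans hω))
      measure_empty
  rcases lt_or_ge t 1 with ht1 | ht1
  · rw [min_eq_right ht1.le, measure_dyadicUniform_preimage_Iic hE hEmono ⟨ht0, ht1⟩]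
  · rw [min_eq_left ht1, ENNReal.ofReal_one, ← measure_univ (μ := P)]
    exact congrArg P (eq_univ_of_forall fun ω => (dyadicUniform_mem_Icc E ω).2.trans ht1)

section Cdf

variable {μ : Measure ℝ} [IsProbabilityMeasure μ] {C : ℝ}

theorem cdf_eq_one_of_ae_abs_le (hμ : ∀ᵐ x ∂μ, |x| ≤ C) {x : ℝ} (hx : C ≤ x) : cdf μ x = 1 := by
  have : μ (Iic x)ᶜ = 0 := measure_mono_null (fun y hy => by
    simp only [mem_compl_iff, mem_Iic, not_le, mem_ofPred_eq] at hy ⊢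
    exact hx.trans_lt (hy.trans_le (le_abs_self y))) (ae_iff.1 hμ)
  rw [cdf_eq_real, measureReal_def, (prob_compl_eq_zero_iff measurableSet_Iic).1 this]
  rfl

theorem cdf_eq_zero_of_ae_abs_le (hμ : ∀ᵐ x ∂μ, |x| ≤ C) {x : ℝ} (hx : x < -C) : cdf μ x = 0 := by
  rw [cdf_eq_real, measureReal_def, measure_mono_null (fun y hy => ?_) (ae_iff.1 hμ)]
  · rfl
  simp only [mem_Iic, mem_ofPred_eq, not_le] at hy ⊢
  exact (neg_le_abs y).trans_lt' (by linarith)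

end Cdf

/-- Clamping `x` to `[-C, C]` and `v` to `min v 1` makes this bounded and monotone in every `v`;
for `v ∈ (0, 1]` and a law supported in `[-C, C]` it is the usual left-continuous quantile. -/
noncomputable def boundedQuantile (μ : Measure ℝ) (C v : ℝ) : ℝ :=
  sInf {x ∈ Icc (-C) C | min v 1 ≤ cdf μ x}

namespace boundedQuantile

variable {μ ν : Measure ℝ} [IsProbabilityMeasure μ] {C : ℝ}

theorem bound_mem (hμ : ∀ᵐ x ∂μ, |x| ≤ C) (v : ℝ) :
    C ∈ {x ∈ Icc (-C) C | min v 1 ≤ cdf μ x} := by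
  obtain ⟨x, hx⟩ := hμ.exists
  refine ⟨⟨by linarith [abs_nonneg x], le_rfl⟩, ?_⟩
  rw [cdf_eq_one_of_ae_abs_le hμ le_rfl]
  exact min_le_right _ _

theorem mem_Icc (hμ : ∀ᵐ x ∂μ, |x| ≤ C) (v : ℝ) : boundedQuantile μ C v ∈ Icc (-C) C :=
  ⟨le_csInf ⟨C, bound_mem hμ v⟩ fun _ hx => hx.1.1,
    csInf_le ⟨-C, fun _ hx => hx.1.1⟩ (bound_mem hμ v)⟩

theorem le_of_cdf_le (hμ : ∀ᵐ x ∂μ, |x| ≤ C) (hle : ∀ x, cdf μ x ≤ cdf ν x) (v : ℝ) :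
    boundedQuantile ν C v ≤ boundedQuantile μ C v :=
  csInf_le_csInf ⟨-C, fun _ hx => hx.1.1⟩ ⟨C, bound_mem hμ v⟩ fun _ hx => ⟨hx.1, hx.2.trans (hle _)⟩

theorem monotone (hμ : ∀ᵐ x ∂μ, |x| ≤ C) : Monotone (boundedQuantile μ C) := fun _ w hvw =>
  csInf_le_csInf ⟨-C, fun _ hx => hx.1.1⟩ ⟨C, bound_mem hμ w⟩
    fun _ hx => ⟨hx.1, (min_le_min_right 1 hvw).trans hx.2⟩

theorem le_iff (hμ : ∀ᵐ x ∂μ, |x| ≤ C) {v : ℝ} (hv : v ∈ Ioc 0 1) (x : ℝ) :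
    boundedQuantile μ C v ≤ x ↔ v ≤ cdf μ x := by
  have hmin : min v 1 = v := min_eq_left hv.2
  constructor
  · intro h
    -- right-continuity of the cdf puts the infimum itself in the set
    have hq : v ≤ cdf μ (boundedQuantile μ C v) := by
      refine ge_of_tendsto (((cdf μ).right_continuous _).tendsto.mono_left
        (nhdsWithin_mono _ Ioi_subset_Ici_self)) (eventually_nhdsWithin_of_forall fun y hy => ?_)
      obtain ⟨z, hz, hzy⟩ := exists_lt_of_csInf_lt ⟨C, bound_mem hμ v⟩ hy
      exact hmin ▸ hz.2.trans (monotone_cdf μ hzy.le)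
    exact hq.trans (monotone_cdf μ h)
  · intro h
    rcases lt_or_ge x (-C) with hx | hx
    · rw [cdf_eq_zero_of_ae_abs_le hμ hx] at h; exact absurd h (not_le.2 hv.1)
    rcases le_or_gt C x with hCx | hxC
    · exact (mem_Icc hμ v).2.trans hCx
    exact csInf_le ⟨-C, fun _ hx => hx.1.1⟩ ⟨⟨hx, hxC.le⟩, by rwa [hmin]⟩

theorem map_comp_of_isUniform {Ω : Type*} [MeasurableSpace Ω] {P : Measure Ω} {U : Ω → ℝ}
    (hUm : Measurable U) (hU : pdf.IsUniform U (Icc 0 1) P) (hμ : ∀ᵐ x ∂μ, |x| ≤ C) :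
    P.map (fun ω => boundedQuantile μ C (U ω)) = μ := by
  have := hU.isProbabilityMeasure (by simp) (by simp)
  have hZ : Measurable fun ω => boundedQuantile μ C (U ω) := (monotone hμ).measurable.comp hUm
  have := Measure.isProbabilityMeasure_map (μ := P) hZ.aemeasurable
  have hU01 : ∀ᵐ ω ∂P, U ω ∈ Ioc 0 1 := by
    have h0 : ∀ᵐ ω ∂P, ω ∉ U ⁻¹' Iic 0 := measure_eq_zero_iff_ae_notMem.1 (by
      simp [measure_preimage_Iic_of_isUniform hUm hU])
    have h1 : ∀ᵐ ω ∂P, ω ∈ U ⁻¹' Iic 1 := mem_ae_iff.2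
      ((prob_compl_eq_zero_iff (hUm measurableSet_Iic)).2
        (by simp [measure_preimage_Iic_of_isUniform hUm hU]))
    filter_upwards [h0, h1] with ω h0 h1 using ⟨not_le.1 h0, h1⟩
  refine Measure.ext_of_Iic _ _ fun x => ?_
  rw [Measure.map_apply hZ measurableSet_Iic, ← ofReal_cdf]
  calc P ((fun ω => boundedQuantile μ C (U ω)) ⁻¹' Iic x) = P (U ⁻¹' Iic (cdf μ x)) :=
        measure_congr (hU01.mono fun ω hω => propext (le_iff hμ hω x))
    _ = ENNReal.ofReal (cdf μ x) := by
        rw [measure_preimage_Iic_of_isUniform hUm hU, min_eq_right (cdf_le_one μ x)]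

end boundedQuantile

section MonetaryUtility

variable {Ω : Type} [MeasurableSpace Ω] {P : Measure Ω} {u : (Ω → ℝ) → ℝ}

def IsTranslationInvariant (P : Measure Ω) (u : (Ω → ℝ) → ℝ) : Prop :=
  ∀ ξ : Ω → ℝ, BddMeas P ξ → ∀ h : ℝ, u (fun ω => ξ ω + h) = u ξ + h

def IsAEMonotone (P : Measure Ω) (u : (Ω → ℝ) → ℝ) : Prop :=
  ∀ ξ η : Ω → ℝ, BddMeas P ξ → BddMeas P η → (∀ᵐ ω ∂P, ξ ω ≤ η ω) → u ξ ≤ u η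

def IsLawInvariant (P : Measure Ω) (u : (Ω → ℝ) → ℝ) : Prop :=
  ∀ ξ η : Ω → ℝ, BddMeas P ξ → BddMeas P η → P.map ξ = P.map η → u ξ = u η

theorem BddMeas.add_const {ξ : Ω → ℝ} (hξ : BddMeas P ξ) (c : ℝ) :
    BddMeas P fun ω => ξ ω + c := by
  obtain ⟨hm, C, hC⟩ := hξ
  exact ⟨hm.add_const c, C + |c|, hC.mono fun ω h => (abs_add_le _ _).trans (by linarith)⟩

theorem BddMeas.exists_ae_map_abs_le {ξ : Ω → ℝ} (hξ : BddMeas P ξ) :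
    ∃ C, ∀ᵐ x ∂P.map ξ, |x| ≤ C := by
  obtain ⟨hm, C, hC⟩ := hξ
  exact ⟨C, (ae_map_iff hm.aemeasurable (measurableSet_le measurable_abs measurable_const)).2 hC⟩

theorem ae_abs_le_max {μ ν : Measure ℝ} {C D : ℝ} (hμ : ∀ᵐ x ∂μ, |x| ≤ C)
    (hν : ∀ᵐ x ∂ν, |x| ≤ D) : (∀ᵐ x ∂μ, |x| ≤ max C D) ∧ ∀ᵐ x ∂ν, |x| ≤ max C D :=
  ⟨hμ.mono fun _ h => h.trans (le_max_left C D), hν.mono fun _ h => h.trans (le_max_right C D)⟩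

theorem map_Iic_le_map_Iic {f g : Ω → ℝ} (hf : Measurable f) (hg : Measurable g)
    (hgf : ∀ ω, g ω ≤ f ω) (x : ℝ) : P.map f (Iic x) ≤ P.map g (Iic x) := by
  rw [Measure.map_apply hf measurableSet_Iic, Measure.map_apply hg measurableSet_Iic]
  exact measure_mono fun ω (hω : f ω ≤ x) => (hgf ω).trans hω

theorem isProbabilityMeasure_mix {α : ℝ} (h0 : 0 ≤ α) (h1 : α ≤ 1) (μ ν : Measure ℝ)
    [IsProbabilityMeasure μ] [IsProbabilityMeasure ν] :
    IsProbabilityMeasure (ENNReal.ofReal α • μ + ENNReal.ofReal (1 - α) • ν) := by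
  constructor
  simp only [Measure.add_apply, Measure.smul_apply, measure_univ, smul_eq_mul, mul_one]
  rw [← ENNReal.ofReal_add h0 (sub_nonneg.2 h1), add_sub_cancel, ENNReal.ofReal_one]

theorem bddMeas_boundedQuantile_comp {U : Ω → ℝ} (hUm : Measurable U) {μ : Measure ℝ}
    [IsProbabilityMeasure μ] {C : ℝ} (hμ : ∀ᵐ x ∂μ, |x| ≤ C) :
    BddMeas P fun ω => boundedQuantile μ C (U ω) :=
  ⟨(boundedQuantile.monotone hμ).measurable.comp hUm, C,
    ae_of_all _ fun ω => abs_le.2 (boundedQuantile.mem_Icc hμ (U ω))⟩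

variable [IsProbabilityMeasure P] {U : Ω → ℝ}

theorem IsLawInvariant.le_of_map_Iic_le (hLaw : IsLawInvariant P u) (hMono : IsAEMonotone P u)
    (hUm : Measurable U) (hU : pdf.IsUniform U (Icc 0 1) P) {X Y : Ω → ℝ} (hX : BddMeas P X)
    (hY : BddMeas P Y) (h : ∀ x, P.map Y (Iic x) ≤ P.map X (Iic x)) : u X ≤ u Y := by
  have := Measure.isProbabilityMeasure_map (μ := P) hX.1.aemeasurable
  have := Measure.isProbabilityMeasure_map (μ := P) hY.1.aemeasurable
  obtain ⟨CX, hCX⟩ := hX.exists_ae_map_abs_le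
  obtain ⟨CY, hCY⟩ := hY.exists_ae_map_abs_le
  obtain ⟨hCX, hCY⟩ := ae_abs_le_max hCX hCY
  have hcdf : ∀ x, cdf (P.map Y) x ≤ cdf (P.map X) x := fun x => by
    simp only [cdf_eq_real, measureReal_def]
    exact ENNReal.toReal_mono (measure_ne_top _ _) (h x)
  calc u X = u fun ω => boundedQuantile (P.map X) (max CX CY) (U ω) :=
        hLaw _ _ hX (bddMeas_boundedQuantile_comp hUm hCX)
          (boundedQuantile.map_comp_of_isUniform hUm hU hCX).symm
    _ ≤ u fun ω => boundedQuantile (P.map Y) (max CX CY) (U ω) :=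
        hMono _ _ (bddMeas_boundedQuantile_comp hUm hCX) (bddMeas_boundedQuantile_comp hUm hCY)
          (ae_of_all _ fun ω => boundedQuantile.le_of_cdf_le hCY hcdf (U ω))
    _ = u Y := hLaw _ _ (bddMeas_boundedQuantile_comp hUm hCY) hY
          (boundedQuantile.map_comp_of_isUniform hUm hU hCY)

theorem exists_map_eq_mix_shift (hTI : IsTranslationInvariant P u) (hCxLS : CxLS P u)
    (hUm : Measurable U) (hU : pdf.IsUniform U (Icc 0 1) P) {ξ η : Ω → ℝ} (hξ : BddMeas P ξ)
    (hη : BddMeas P η) {α : ℝ} (hα0 : 0 < α) (hα1 : α < 1) :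
    ∃ Z, BddMeas P Z ∧ u Z = u ξ ∧ P.map Z =
      ENNReal.ofReal α • P.map ξ + ENNReal.ofReal (1 - α) • P.map fun ω => η ω + (u ξ - u η) := by
  set η' := fun ω => η ω + (u ξ - u η)
  have hη' : BddMeas P η' := hη.add_const _
  have huη' : u ξ = u η' := by rw [hTI η hη]; ring
  have := Measure.isProbabilityMeasure_map (μ := P) hξ.1.aemeasurable
  have := Measure.isProbabilityMeasure_map (μ := P) hη'.1.aemeasurable
  have := isProbabilityMeasure_mix hα0.le hα1.le (P.map ξ) (P.map η')
  obtain ⟨Cξ, hCξ⟩ := hξ.exists_ae_map_abs_le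
  obtain ⟨Cη, hCη⟩ := hη'.exists_ae_map_abs_le
  obtain ⟨hCξ, hCη⟩ := ae_abs_le_max hCξ hCη
  have hν : ∀ᵐ x ∂(ENNReal.ofReal α • P.map ξ + ENNReal.ofReal (1 - α) • P.map η'),
      |x| ≤ max Cξ Cη :=
    ae_add_measure_iff.2 ⟨Measure.ae_smul_measure hCξ _, Measure.ae_smul_measure hCη _⟩
  have hZ := bddMeas_boundedQuantile_comp (P := P) hUm hν
  have hZmap := boundedQuantile.map_comp_of_isUniform hUm hU hν
  exact ⟨_, hZ, hCxLS ξ η' _ hξ hη' hZ huη' α hα0 hα1 hZmap, hZmap⟩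

theorem le_of_map_eq_mix_of_le (hTI : IsTranslationInvariant P u) (hMono : IsAEMonotone P u)
    (hLaw : IsLawInvariant P u) (hCxLS : CxLS P u) (hUm : Measurable U)
    (hU : pdf.IsUniform U (Icc 0 1) P) {ξ η ζ : Ω → ℝ} (hξ : BddMeas P ξ) (hη : BddMeas P η)
    (hζ : BddMeas P ζ) {α : ℝ} (hα0 : 0 < α) (hα1 : α < 1)
    (hmix : P.map ζ = ENNReal.ofReal α • P.map ξ + ENNReal.ofReal (1 - α) • P.map η)
    (hle : u ξ ≤ u η) : u ξ ≤ u ζ := by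
  obtain ⟨Z, hZ, huZ, hZmap⟩ := exists_map_eq_mix_shift hTI hCxLS hUm hU hξ hη hα0 hα1
  rw [← huZ]
  refine hLaw.le_of_map_Iic_le hMono hUm hU hZ hζ fun x => ?_
  rw [hmix, hZmap]
  simp only [Measure.add_apply, Measure.smul_apply, smul_eq_mul]
  gcongr _ + _ * ?_
  exact map_Iic_le_map_Iic hη.1 (hη.add_const _).1 (fun ω => by linarith) x

theorem le_of_map_eq_mix_of_ge (hTI : IsTranslationInvariant P u) (hMono : IsAEMonotone P u)
    (hLaw : IsLawInvariant P u) (hCxLS : CxLS P u) (hUm : Measurable U)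
    (hU : pdf.IsUniform U (Icc 0 1) P) {ξ η ζ : Ω → ℝ} (hξ : BddMeas P ξ) (hη : BddMeas P η)
    (hζ : BddMeas P ζ) {α : ℝ} (hα0 : 0 < α) (hα1 : α < 1)
    (hmix : P.map ζ = ENNReal.ofReal α • P.map ξ + ENNReal.ofReal (1 - α) • P.map η)
    (hge : u η ≤ u ξ) : u ζ ≤ u ξ := by
  obtain ⟨Z, hZ, huZ, hZmap⟩ := exists_map_eq_mix_shift hTI hCxLS hUm hU hξ hη hα0 hα1
  rw [← huZ]
  refine hLaw.le_of_map_Iic_le hMono hUm hU hζ hZ fun x => ?_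
  rw [hmix, hZmap]
  simp only [Measure.add_apply, Measure.smul_apply, smul_eq_mul]
  gcongr _ + _ * ?_
  exact map_Iic_le_map_Iic (hη.add_const _).1 hη.1 (fun ω => by linarith) x

theorem mem_Icc_of_map_eq_mix (hTI : IsTranslationInvariant P u) (hMono : IsAEMonotone P u)
    (hLaw : IsLawInvariant P u) (hCxLS : CxLS P u) (hUm : Measurable U)
    (hU : pdf.IsUniform U (Icc 0 1) P) {ξ η ζ : Ω → ℝ} (hξ : BddMeas P ξ) (hη : BddMeas P η)
    (hζ : BddMeas P ζ) {α : ℝ} (hα0 : 0 < α) (hα1 : α < 1)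
    (hmix : P.map ζ = ENNReal.ofReal α • P.map ξ + ENNReal.ofReal (1 - α) • P.map η) :
    u ζ ∈ Icc (min (u ξ) (u η)) (max (u ξ) (u η)) := by
  have hmix' :
      P.map ζ = ENNReal.ofReal (1 - α) • P.map η + ENNReal.ofReal (1 - (1 - α)) • P.map ξ := by
    rw [hmix, add_comm, sub_sub_cancel]
  have hα0' : 0 < 1 - α := sub_pos.2 hα1
  have hα1' : 1 - α < 1 := sub_lt_self 1 hα0
  rcases le_total (u ξ) (u η) with h | h
  · rw [min_eq_left h, max_eq_right h]
    exact ⟨le_of_map_eq_mix_of_le hTI hMono hLaw hCxLS hUm hU hξ hη hζ hα0 hα1 hmix h,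
      le_of_map_eq_mix_of_ge hTI hMono hLaw hCxLS hUm hU hη hξ hζ hα0' hα1' hmix' h⟩
  · rw [min_eq_right h, max_eq_left h]
    exact ⟨le_of_map_eq_mix_of_le hTI hMono hLaw hCxLS hUm hU hη hξ hζ hα0' hα1' hmix' h,
      le_of_map_eq_mix_of_ge hTI hMono hLaw hCxLS hUm hU hξ hη hζ hα0 hα1 hmix h⟩

end MonetaryUtility

theorem stmt_8_general {Ω : Type} [MeasurableSpace Ω] (P : Measure Ω) [IsProbabilityMeasure P]
    (u : (Ω → ℝ) → ℝ)
    (hAtomless : ∀ A : Set Ω, MeasurableSet A → 0 < P A →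
      ∃ B : Set Ω, B ⊆ A ∧ MeasurableSet B ∧ 0 < P B ∧ P B < P A)
    (hTI : ∀ ξ : Ω → ℝ, BddMeas P ξ → ∀ h : ℝ, u (fun ω => ξ ω + h) = u ξ + h)
    (hMono : ∀ ξ η : Ω → ℝ, BddMeas P ξ → BddMeas P η → (∀ᵐ ω ∂P, ξ ω ≤ η ω) → u ξ ≤ u η)
    (hLaw : ∀ ξ η : Ω → ℝ, BddMeas P ξ → BddMeas P η → P.map ξ = P.map η → u ξ = u η)
    (hCxLS : CxLS P u) :
    ∀ ξ η ζ : Ω → ℝ, BddMeas P ξ → BddMeas P η → BddMeas P ζ →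
      ∀ α : ℝ, 0 < α → α < 1 →
      P.map ζ = ENNReal.ofReal α • P.map ξ + ENNReal.ofReal (1 - α) • P.map η →
      ((0 ≤ u ξ → 0 ≤ u η → 0 ≤ u ζ) ∧ (u ξ < 0 → u η < 0 → u ζ < 0)) := by
  intro ξ η ζ hξ hη hζ α hα0 hα1 hmix
  obtain ⟨U, hUm, hU⟩ := IsAtomless.exists_isUniform hAtomless
  obtain ⟨hlow, hhigh⟩ :=
    mem_Icc_of_map_eq_mix hTI hMono hLaw hCxLS hUm hU hξ hη hζ hα0 hα1 hmix
  exact ⟨fun h1 h2 => (le_min h1 h2).trans hlow, fun h1 h2 => hhigh.trans_lt (max_lt h1 h2)⟩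

theorem stmt_8 {Ω : Type} [MeasurableSpace Ω] (P : Measure Ω) [IsProbabilityMeasure P]
    (u : (Ω → ℝ) → ℝ)
    (hAtomless : ∀ A : Set Ω, MeasurableSet A → 0 < P A →
      ∃ B : Set Ω, B ⊆ A ∧ MeasurableSet B ∧ 0 < P B ∧ P B < P A)
    (hTI : ∀ ξ : Ω → ℝ, BddMeas P ξ → ∀ h : ℝ, u (fun ω => ξ ω + h) = u ξ + h)
    (hMono : ∀ ξ η : Ω → ℝ, BddMeas P ξ → BddMeas P η → (∀ᵐ ω ∂P, ξ ω ≤ η ω) → u ξ ≤ u η)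
    (hNorm : u (fun _ => 0) = 0)
    (hLaw : ∀ ξ η : Ω → ℝ, BddMeas P ξ → BddMeas P η → P.map ξ = P.map η → u ξ = u η)
    (hConc : ∀ ξ η : Ω → ℝ, BddMeas P ξ → BddMeas P η → ∀ l : ℝ, 0 ≤ l → l ≤ 1 →
      l * u ξ + (1 - l) * u η ≤ u (fun ω => l * ξ ω + (1 - l) * η ω))
    (hFatou : ∀ (ξs : ℕ → Ω → ℝ) (ξ : Ω → ℝ), (∀ n, BddMeas P (ξs n)) → BddMeas P ξ →
      (∃ C : ℝ, ∀ n, ∀ᵐ ω ∂P, |ξs n ω| ≤ C) →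
      TendstoInMeasure P ξs Filter.atTop ξ →
      Filter.limsup (fun n => u (ξs n)) Filter.atTop ≤ u ξ)
    (hCxLS : CxLS P u) :
    ∀ ξ η ζ : Ω → ℝ, BddMeas P ξ → BddMeas P η → BddMeas P ζ →
      ∀ α : ℝ, 0 < α → α < 1 →
      P.map ζ = ENNReal.ofReal α • P.map ξ + ENNReal.ofReal (1 - α) • P.map η →
      ((0 ≤ u ξ → 0 ≤ u η → 0 ≤ u ζ) ∧ (u ξ < 0 → u η < 0 → u ζ < 0)) :=
  stmt_8_general P u hAtomless hTI hMono hLaw hCxLS
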